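/- arXiv:2004.01884 — 3 statements merged into one kernel-verified Lean document; each statement's English description precedes it below -/
import Mathlib

section
/- Every sum-free subset S of ℤ/pℤ with p prime satisfies |S| ≤ (p+1)/3. -/
open scoped Pointwise

/-- Every sum-free subset `S` of `ℤ/pℤ`, `p` prime, satisfies `|S| ≤ (p+1)/3`. -/
theorem sumfree_card_le (p : ℕ) (hp : p.Prime) (S : Finset (ZMod p))
    (hS : ∀ a ∈ S, ∀ b ∈ S, a + b ∉ S) :
    3 * S.card ≤ p + 1 := by
  haveI : NeZero p := ⟨hp.ne_zero⟩
  rcases S.eq_empty_or_nonempty with rfl | hne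
  · simp
  have hcd := ZMod.cauchy_davenport hp hne hne
  have hdisj : Disjoint (S + S) S := by
    rw [Finset.disjoint_left]
    rintro x hx hxS
    obtain ⟨a, ha, b, hb, rfl⟩ := Finset.mem_add.1 hx
    exact hS a ha b hb hxS
  have hcardle : (S + S).card + S.card ≤ p := by
    have := Finset.card_union_of_disjoint hdisj ▸ Finset.card_le_card (Finset.subset_univ (S + S ∪ S))
    simpa [ZMod.card p, hp.pos] using this
  have h1 : 1 ≤ S.card := hne.card_pos
  rcases min_le_iff.1 hcd with h | h
  · omega
  · omega
end

section
/- Let A ⊆ ℤ/pℤ, Γ ≤ (ℤ/pℤ)* a multiplicative subgroup, I = [p/3, 2p/3), Δ_ξ = |ξΓ ∩ I| - |I|/n, a_ξ = |ξΓ ∩ A ∩ (ℤ/pℤ)*| - |A ∩ (ℤ/pℤ)*|/n, where n is the index of Γ. Then for every coset α: (1/|Γ|) ∑_{x ∈ αΓ} |xA ∩ I| = |A∩(ℤ/pℤ)*|·|I|/(p-1) + (1/|Γ|) ∑_ξ a_ξ Δ_{αξ}. -/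
/-!
View `A` and `I` inside `(ZMod p)ˣ` (neither contains `0`) and write `A_ξ`, `I_ξ` for their parts
in the coset `ξ`. Exchanging the order of summation, `∑_{γ ∈ Γ} |αγA ∩ I|` counts the pairs
`(u, v) ∈ A × I` with `v ∈ αuΓ`, so it equals `∑_ξ |A_ξ| |I_{αξ}|`. Centering both factors at
their means `|A|/n` and `|I|/n` turns this into `∑_ξ a_ξ Δ_{αξ} + |A||I|/n`, and `n |Γ| = p - 1`.
-/

open Finset QuotientGroup

theorem Fintype.sum_mul_eq_sum_sub_mean_mul_sub_mean_add {ι 𝕜 : Type*} [Fintype ι] [Field 𝕜]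
    [CharZero 𝕜] (f g : ι → 𝕜) :
    ∑ i, f i * g i =
      ∑ i, (f i - (∑ j, f j) / card ι) * (g i - (∑ j, g j) / card ι) +
        (∑ i, f i) * (∑ i, g i) / card ι := by
  rcases isEmpty_or_nonempty ι with _ | _
  · simp
  have hcard : (card ι : 𝕜) ≠ 0 := Nat.cast_ne_zero.2 card_ne_zero
  simp only [sub_mul, mul_sub, sum_sub_distrib, ← sum_mul, ← mul_sum, sum_const, card_univ,
    nsmul_eq_mul]
  field_simp
  ring

section Units

variable {G₀ : Type*} [GroupWithZero G₀] [DecidableEq G₀] {s : Finset G₀}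

theorem Finset.image_val_preimage_units (hs : (0 : G₀) ∉ s) :
    (s.preimage Units.val Units.val_injective.injOn).image Units.val = s := by
  classical
  rw [image_preimage]
  exact filter_true_of_mem fun x hx => ⟨Units.mk0 x (ne_of_mem_of_not_mem hx hs), rfl⟩

theorem Finset.card_preimage_units (hs : (0 : G₀) ∉ s) :
    #(s.preimage Units.val Units.val_injective.injOn) = #s := by
  conv_rhs => rw [← image_val_preimage_units hs]
  exact (card_image_of_injective _ Units.val_injective).symm

theorem Finset.card_image_mul_inter (x : G₀ˣ) (hs : (0 : G₀) ∉ s) (t : Finset G₀) :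
    #(s.image (fun y => (x : G₀) * y) ∩ t) =
      #{u ∈ s.preimage Units.val Units.val_injective.injOn |
        x * u ∈ t.preimage Units.val Units.val_injective.injOn} := by
  rw [← filter_mem_eq_inter, filter_image,
    card_image_of_injective _ (mul_right_injective₀ x.ne_zero)]
  conv_lhs => rw [← image_val_preimage_units hs]
  rw [filter_image, card_image_of_injective _ Units.val_injective]
  simp only [mem_preimage, Units.val_mul]

end Units

section Group

variable {G : Type*} [Group G] [Fintype G] (Γ : Subgroup G) [DecidablePred (· ∈ Γ)]

theorem QuotientGroup.sum_card_filter_mk_eq (S : Finset G) :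
    ∑ ξ : G ⧸ Γ, #(S.filter fun u : G => (u : G ⧸ Γ) = ξ) = #S :=
  (card_eq_sum_card_fiberwise (f := fun u : G => (u : G ⧸ Γ)) fun _ _ => mem_univ _).symm

theorem QuotientGroup.card_filter_mk_eq [DecidableEq G] (S : Finset G) (g : G) :
    #(S.filter fun u : G => (u : G ⧸ Γ) = g) = #{γ : Γ | g * ↑γ ∈ S} := by
  refine card_bij' (fun u hu => ⟨g⁻¹ * u, QuotientGroup.eq.1 (mem_filter.1 hu).2.symm⟩)
    (fun γ _ => g * γ) ?_ ?_ ?_ ?_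
  · intro u hu
    simpa using (mem_filter.1 hu).1
  · intro γ hγ
    simp only [mem_filter, mem_univ, true_and] at hγ ⊢
    exact ⟨hγ, QuotientGroup.eq.2 (by simp)⟩
  · intro u _
    simp
  · intro γ _
    simp

end Group

section CommGroup

variable {G : Type*} [CommGroup G] [Fintype G] [DecidableEq G] (Γ : Subgroup G)
  [DecidablePred (· ∈ Γ)]

theorem QuotientGroup.sum_card_filter_mul_mem (B J : Finset G) (α : G) :
    ∑ γ : Γ, #{u ∈ B | α * γ * u ∈ J} =
      ∑ ξ : G ⧸ Γ, #(B.filter fun u : G => (u : G ⧸ Γ) = ξ) *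
        #(J.filter fun v : G => (v : G ⧸ Γ) = α * ξ) := by
  calc ∑ γ : Γ, #{u ∈ B | α * γ * u ∈ J}
      = ∑ u ∈ B, #{γ : Γ | α * u * γ ∈ J} := by
        simp only [card_filter]
        rw [sum_comm]
        simp only [mul_right_comm]
    _ = ∑ u ∈ B, #(J.filter fun v : G => (v : G ⧸ Γ) = α * u) :=
        sum_congr rfl fun u _ => (card_filter_mk_eq Γ J (α * u)).symm
    _ = _ := by
        rw [← sum_fiberwise B (fun u : G => (u : G ⧸ Γ))]
        refine sum_congr rfl fun ξ _ => ?_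
        rw [sum_congr rfl fun u hu => by rw [(mem_filter.1 hu).2], sum_const, smul_eq_mul]

theorem QuotientGroup.sum_card_filter_mul_mem_eq {𝕜 : Type*} [Field 𝕜] [CharZero 𝕜]
    (B J : Finset G) (α : G) :
    (∑ γ : Γ, #{u ∈ B | α * γ * u ∈ J} : 𝕜) =
      #B * #J / Γ.index + ∑ ξ : G ⧸ Γ,
        ((#(B.filter fun u : G => (u : G ⧸ Γ) = ξ) : 𝕜) - #B / Γ.index) *
          (#(J.filter fun v : G => (v : G ⧸ Γ) = α * ξ) - #J / Γ.index) := by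
  have hJ : ∑ ξ : G ⧸ Γ, #(J.filter fun v : G => (v : G ⧸ Γ) = α * ξ) = #J :=
    (Equiv.sum_comp (Equiv.mulLeft (α : G ⧸ Γ)) _).trans (sum_card_filter_mk_eq Γ J)
  have key := Fintype.sum_mul_eq_sum_sub_mean_mul_sub_mean_add
    (fun ξ : G ⧸ Γ => (#(B.filter fun u : G => (u : G ⧸ Γ) = ξ) : 𝕜))
    (fun ξ => (#(J.filter fun v : G => (v : G ⧸ Γ) = α * ξ) : 𝕜))
  simp only [← Nat.cast_sum, hJ, sum_card_filter_mk_eq] at key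
  rw [Subgroup.index, Nat.card_eq_fintype_card, ← Nat.cast_sum, sum_card_filter_mul_mem]
  push_cast
  rw [key, add_comm]

end CommGroup

theorem QuotientGroup.card_filter_preimage_units_mk_eq {G₀ : Type*} [CommGroupWithZero G₀]
    [Fintype G₀] [DecidableEq G₀] (Γ : Subgroup G₀ˣ) [DecidablePred (· ∈ Γ)]
    (S : Finset G₀) (ξ : G₀ˣ) :
    #((S.preimage Units.val Units.val_injective.injOn).filter
        fun u : G₀ˣ => (u : G₀ˣ ⧸ Γ) = ξ) =
      Nat.card {γ : Γ // ((ξ * γ : G₀ˣ) : G₀) ∈ S} := by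
  rw [card_filter_mk_eq, Nat.card_eq_fintype_card, Fintype.card_subtype]
  simp only [mem_preimage]

theorem coset_average_identity_general (p : ℕ) [Fact p.Prime]
    (A : Finset (ZMod p)) (h0 : (0 : ZMod p) ∉ A)
    (Γ : Subgroup (ZMod p)ˣ) (n : ℕ) (hn : n = Γ.index)
    (I : Finset (ZMod p))
    (hI : I = Finset.univ.filter (fun x : ZMod p => p ≤ 3 * x.val ∧ 3 * x.val < 2 * p))
    (Δ a : ((ZMod p)ˣ ⧸ Γ) → ℝ)
    (hΔ : ∀ ξ : (ZMod p)ˣ, Δ (QuotientGroup.mk ξ) =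
      (Nat.card {γ : Γ // (((ξ * (γ : (ZMod p)ˣ)) : (ZMod p)ˣ) : ZMod p) ∈ I} : ℝ)
        - (I.card : ℝ) / n)
    (ha : ∀ ξ : (ZMod p)ˣ, a (QuotientGroup.mk ξ) =
      (Nat.card {γ : Γ // (((ξ * (γ : (ZMod p)ˣ)) : (ZMod p)ˣ) : ZMod p) ∈ A} : ℝ)
        - (A.card : ℝ) / n)
    (α : (ZMod p)ˣ) :
    (1 / (Nat.card Γ : ℝ)) * ∑ᶠ γ : Γ,
        (((A.image (fun t => (((α * (γ : (ZMod p)ˣ)) : (ZMod p)ˣ) : ZMod p) * t)) ∩ I).card : ℝ)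
      = (A.card : ℝ) * (I.card : ℝ) / ((p : ℝ) - 1) +
        (1 / (Nat.card Γ : ℝ)) *
          ∑ᶠ ξ : (ZMod p)ˣ ⧸ Γ, a ξ * Δ (QuotientGroup.mk α * ξ) := by
  classical
  have hI0 : (0 : ZMod p) ∉ I := by simp [hI, (Fact.out : p.Prime).ne_zero]
  have hfiber : ∀ (S : Finset (ZMod p)) (f : (ZMod p)ˣ ⧸ Γ → ℝ),
      (∀ ξ : (ZMod p)ˣ, f ξ = Nat.card {γ : Γ // ((ξ * γ : (ZMod p)ˣ) : ZMod p) ∈ S} - #S / n) →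
      ∀ ξ, f ξ = #((S.preimage Units.val Units.val_injective.injOn).filter
        fun u : (ZMod p)ˣ => (u : (ZMod p)ˣ ⧸ Γ) = ξ) - #S / n := by
    intro S f hf ξ
    induction ξ using QuotientGroup.induction_on with
    | H ξ => rw [hf, card_filter_preimage_units_mk_eq]
  have hcard : (Nat.card Γ : ℝ) * n = p - 1 := by
    rw [hn, ← Nat.cast_mul, Subgroup.card_mul_index, Nat.card_eq_fintype_card, ZMod.card_units,
      Nat.cast_sub (Fact.out : p.Prime).one_le, Nat.cast_one]
  have hΓ : (Nat.card Γ : ℝ) ≠ 0 := Nat.cast_ne_zero.2 Nat.card_pos.ne'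
  rw [finsum_eq_sum_of_fintype, finsum_eq_sum_of_fintype]
  simp only [card_image_mul_inter _ h0, sum_card_filter_mul_mem_eq, hfiber A a ha,
    hfiber I Δ hΔ, card_preimage_units h0, card_preimage_units hI0, ← hn, ← hcard]
  field_simp

/-- Averaging `|xA ∩ I|` over a coset `αΓ`:
`(1/|Γ|) ∑_{x ∈ αΓ} |xA ∩ I| = |A|·|I|/(p-1) + (1/|Γ|) ∑_ξ a_ξ Δ_{αξ}`,
where `Δ_ξ = |ξΓ ∩ I| - |I|/n` and `a_ξ = |ξΓ ∩ A| - |A|/n` (with `0 ∉ A`). -/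
theorem coset_average_identity (p : ℕ) [Fact p.Prime] (hp : 3 < p)
    (A : Finset (ZMod p)) (h0 : (0 : ZMod p) ∉ A)
    (Γ : Subgroup (ZMod p)ˣ) (n : ℕ) (hn : n = Γ.index)
    (I : Finset (ZMod p))
    (hI : I = Finset.univ.filter (fun x : ZMod p => p ≤ 3 * x.val ∧ 3 * x.val < 2 * p))
    (Δ a : ((ZMod p)ˣ ⧸ Γ) → ℝ)
    (hΔ : ∀ ξ : (ZMod p)ˣ, Δ (QuotientGroup.mk ξ) =
      (Nat.card {γ : Γ // (((ξ * (γ : (ZMod p)ˣ)) : (ZMod p)ˣ) : ZMod p) ∈ I} : ℝ)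
        - (I.card : ℝ) / n)
    (ha : ∀ ξ : (ZMod p)ˣ, a (QuotientGroup.mk ξ) =
      (Nat.card {γ : Γ // (((ξ * (γ : (ZMod p)ˣ)) : (ZMod p)ˣ) : ZMod p) ∈ A} : ℝ)
        - (A.card : ℝ) / n)
    (α : (ZMod p)ˣ) :
    (1 / (Nat.card Γ : ℝ)) * ∑ᶠ γ : Γ,
        (((A.image (fun t => (((α * (γ : (ZMod p)ˣ)) : (ZMod p)ˣ) : ZMod p) * t)) ∩ I).card : ℝ)
      = (A.card : ℝ) * (I.card : ℝ) / ((p : ℝ) - 1) +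
        (1 / (Nat.card Γ : ℝ)) *
          ∑ᶠ ξ : (ZMod p)ˣ ⧸ Γ, a ξ * Δ (QuotientGroup.mk α * ξ) :=
  coset_average_identity_general p A h0 Γ n hn I hI Δ a hΔ ha α
end

section
/- Let p ≡ 1 (mod 4) be prime, A ⊆ (ℤ/pℤ)*, and suppose the largest sum-free subset of A has size |A|/3 + ψ. If D := ½(⌊2p/3⌋ - ⌊p/3⌋) - |Q ∩ [p/3,2p/3)| > 0 (where Q is the set of quadratic residues), then |∑_{x ∈ A} (x/p)| ≤ (2/D)·(ψ·|Q| + |Q|). -/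
/-!
If `I` is sum-free then so is `{a ∈ A | x * a ∈ I}` for every `x`, hence summing `|xA ∩ I|` over
`x` in the set of residues (or of non-residues) gives at most `|Q| · sf(A)`. Swapping the sums,
`x ↦ x * a` maps the `x` with `χ x = ε` and `x * a ∈ I` onto the `z ∈ I` with `χ z = ε χ(a)`, so the
two sums are `(|A| |I| ± σ S) / 2`, where `S = ∑_{a ∈ A} χ a` and `σ = ∑_{z ∈ I} χ z`. Hence
`|σ S| ≤ (p - 1) sf(A) - |A| |I|`. For the middle third `I = [p/3, 2p/3)` one has `σ = -2D` and
`3 |I| ≥ p - 1 = 2 |Q|`, which gives `|S| D ≤ |Q| ψ`.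
-/

open Finset

def IsSumFree {α : Type*} [Add α] (s : Finset α) : Prop :=
  ∀ a ∈ s, ∀ b ∈ s, a + b ∉ s

noncomputable def sumFreeNumber {α : Type*} [Add α] (A : Finset α) : ℕ :=
  sSup {k : ℕ | ∃ B ⊆ A, IsSumFree B ∧ #B = k}

section SumFree

variable {α : Type*}

theorem IsSumFree.card_le_sumFreeNumber [Add α] {A B : Finset α} (hBA : B ⊆ A)
    (hB : IsSumFree B) : #B ≤ sumFreeNumber A :=
  le_csSup ⟨#A, by rintro k ⟨C, hCA, -, rfl⟩; exact card_le_card hCA⟩ ⟨B, hBA, hB, rfl⟩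

theorem IsSumFree.filter_map_mem {β : Type*} [AddZeroClass α] [AddZeroClass β] [DecidableEq β]
    {I : Finset β} (hI : IsSumFree I) (f : α →+ β) (A : Finset α) :
    IsSumFree {a ∈ A | f a ∈ I} := by
  intro a ha b hb hab
  simp only [mem_filter] at ha hb hab
  exact hI _ ha.2 _ hb.2 (map_add f a b ▸ hab.2)

theorem IsSumFree.sum_card_filter_mul_mem_le [NonUnitalNonAssocSemiring α] [DecidableEq α]
    {I : Finset α} (hI : IsSumFree I) (A T : Finset α) :
    ∑ a ∈ A, #{x ∈ T | x * a ∈ I} ≤ #T * sumFreeNumber A :=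
  calc ∑ a ∈ A, #{x ∈ T | x * a ∈ I} = ∑ x ∈ T, #{a ∈ A | x * a ∈ I} := by
        simp only [card_filter]; exact sum_comm
    _ ≤ ∑ _x ∈ T, sumFreeNumber A := by
        gcongr with x
        exact (hI.filter_map_mem (.mulLeft x) A).card_le_sumFreeNumber (filter_subset _ _)
    _ = #T * sumFreeNumber A := by rw [sum_const, smul_eq_mul]

end SumFree

section QuadraticChar

variable {F : Type*} [Field F] [Fintype F] [DecidableEq F]

local notation "χ" => quadraticChar F

theorem quadraticChar_eq_one_iff_exists_mul_self {a : F} :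
    χ a = 1 ↔ a ≠ 0 ∧ ∃ y, y * y = a := by
  by_cases ha : a = 0
  · simp [ha]
  · rw [quadraticChar_one_iff_isSquare ha]; simp [ha, IsSquare, eq_comm]

theorem card_filter_quadraticChar_mul_mem (I : Finset F) {a : F} (ha : a ≠ 0) (ε : ℤ) :
    #{x | χ x = ε ∧ x * a ∈ I} = #{z ∈ I | χ z = ε * χ a} := by
  refine card_nbij' (· * a) (· * a⁻¹) ?_ ?_ ?_ ?_ <;> intro x hx <;>
    simp only [coe_filter, mem_univ, true_and, Set.mem_ofPred_eq] at hx ⊢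
  · rw [map_mul, hx.1]; exact ⟨hx.2, rfl⟩
  · refine ⟨mul_right_cancel₀ (quadraticChar_eq_zero_iff.not.2 ha) ?_, by field_simp; exact hx.1⟩
    rw [← map_mul, inv_mul_cancel_right₀ ha, hx.2]
  · field_simp
  · field_simp

theorem two_mul_card_filter_quadraticChar_eq {I : Finset F} (hI0 : (0 : F) ∉ I) {η : ℤ}
    (hη : η ^ 2 = 1) : 2 * (#{z ∈ I | χ z = η} : ℤ) = #I + η * ∑ z ∈ I, χ z := by
  rw [natCast_card_filter, mul_sum, card_eq_sum_ones, Nat.cast_sum, mul_sum, ← sum_add_distrib]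
  refine sum_congr rfl fun z hz ↦ ?_
  have hz : χ z ^ 2 = η ^ 2 := (quadraticChar_sq_one (ne_of_mem_of_not_mem hz hI0)).trans hη.symm
  split_ifs with h
  · rw [h]; push_cast; linarith
  · rw [(sq_eq_sq_iff_eq_or_eq_neg.1 hz).resolve_left h]; push_cast; linarith

theorem two_mul_card_filter_quadraticChar_eq_card_sub_one (hF : ringChar F ≠ 2) {ε : ℤ}
    (hε : ε ^ 2 = 1) : 2 * (#{x | χ x = ε} : ℤ) = Fintype.card F - 1 := by
  have hε0 : χ 0 ≠ ε := by rintro h; rw [quadraticChar_zero] at h; subst h; norm_num at hε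
  have h := two_mul_card_filter_quadraticChar_eq (notMem_erase (0 : F) univ) hε
  rwa [filter_erase, erase_eq_of_notMem (by simpa using hε0),
    sum_erase _ (quadraticChar_zero (F := F)), quadraticChar_sum_zero hF, mul_zero, add_zero,
    card_erase_of_mem (mem_univ 0), card_univ, Nat.cast_sub Fintype.card_pos, Nat.cast_one] at h

theorem card_mul_card_add_mul_sum_quadraticChar_le (hF : ringChar F ≠ 2) {A I : Finset F}
    (hA : ∀ a ∈ A, a ≠ 0) (hI : IsSumFree I) (hI0 : (0 : F) ∉ I) {ε : ℤ} (hε : ε ^ 2 = 1) :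
    (#A * #I : ℤ) + ε * (∑ z ∈ I, χ z) * ∑ a ∈ A, χ a ≤
      (Fintype.card F - 1) * sumFreeNumber A :=
  calc (#A * #I : ℤ) + ε * (∑ z ∈ I, χ z) * ∑ a ∈ A, χ a
      = ∑ a ∈ A, (#I + ε * χ a * ∑ z ∈ I, χ z) := by
        rw [sum_add_distrib, sum_const, nsmul_eq_mul, ← sum_mul, ← mul_sum]; ring
    _ = 2 * ∑ a ∈ A, (#{x ∈ {x | χ x = ε} | x * a ∈ I} : ℤ) := by
        rw [mul_sum]
        refine sum_congr rfl fun a ha ↦ ?_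
        have hη : (ε * χ a) ^ 2 = 1 := by rw [mul_pow, hε, quadraticChar_sq_one (hA a ha), one_mul]
        rw [filter_filter, card_filter_quadraticChar_mul_mem I (hA a ha),
          two_mul_card_filter_quadraticChar_eq hI0 hη]
    _ ≤ 2 * (#{x | χ x = ε} * sumFreeNumber A : ℕ) := by
        gcongr; exact_mod_cast hI.sum_card_filter_mul_mem_le A _
    _ = (Fintype.card F - 1) * sumFreeNumber A := by
        rw [Nat.cast_mul, ← mul_assoc, two_mul_card_filter_quadraticChar_eq_card_sub_one hF hε]

theorem abs_mul_sum_quadraticChar_le (hF : ringChar F ≠ 2) {A I : Finset F}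
    (hA : ∀ a ∈ A, a ≠ 0) (hI : IsSumFree I) (hI0 : (0 : F) ∉ I) :
    |(∑ z ∈ I, χ z) * ∑ a ∈ A, χ a| ≤ (Fintype.card F - 1) * sumFreeNumber A - #A * #I := by
  have h₁ := card_mul_card_add_mul_sum_quadraticChar_le hF hA hI hI0 (ε := 1) (by norm_num)
  have h₂ := card_mul_card_add_mul_sum_quadraticChar_le hF hA hI hI0 (ε := -1) (by norm_num)
  rw [abs_le]; constructor <;> linarith

end QuadraticChar

section MiddleThird

variable (n : ℕ) [NeZero n]

def middleThird : Finset (ZMod n) := {x | n ≤ 3 * x.val ∧ 3 * x.val < 2 * n}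

variable {n}

theorem isSumFree_middleThird : IsSumFree (middleThird n) := by
  intro a ha b hb hab
  simp only [middleThird, mem_filter, mem_univ, true_and] at ha hb hab
  rcases lt_or_ge (a.val + b.val) n with h | h
  · rw [ZMod.val_add_of_lt h] at hab; omega
  · rw [ZMod.val_add_of_le h] at hab; omega

theorem zero_notMem_middleThird : (0 : ZMod n) ∉ middleThird n := by
  simp [middleThird, NeZero.ne n]

theorem card_middleThird : #(middleThird n) = 2 * n / 3 - n / 3 := by
  have : #(middleThird n) = #(Ico ((n + 2) / 3) ((2 * n + 2) / 3)) := by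
    refine card_nbij' ZMod.val (↑) (fun x hx ↦ ?_) (fun v hv ↦ ?_)
      (fun x _ ↦ ZMod.natCast_zmod_val x) (fun v hv ↦ ZMod.val_cast_of_lt ?_)
    · simp only [middleThird, coe_filter, mem_univ, true_and, Set.mem_ofPred_eq] at hx
      simp only [coe_Ico, Set.mem_Ico]; omega
    · simp only [coe_Ico, Set.mem_Ico] at hv
      simp only [middleThird, coe_filter, mem_univ, true_and, Set.mem_ofPred_eq]
      rw [ZMod.val_cast_of_lt (by omega)]; omega
    · simp only [coe_Ico, Set.mem_Ico] at hv; omega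
  -- `omega` does not split on `n % 3` by itself
  obtain ⟨k, rfl | rfl | rfl⟩ : ∃ k, n = 3 * k ∨ n = 3 * k + 1 ∨ n = 3 * k + 2 :=
    ⟨n / 3, by omega⟩
  all_goals rw [this, Nat.card_Ico]; omega

theorem sub_one_le_three_mul_card_middleThird : n - 1 ≤ 3 * #(middleThird n) := by
  obtain ⟨k, rfl | rfl | rfl⟩ : ∃ k, n = 3 * k ∨ n = 3 * k + 1 ∨ n = 3 * k + 2 :=
    ⟨n / 3, by omega⟩
  all_goals rw [card_middleThird]; omega

end MiddleThird

section ZModPrime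

variable {p : ℕ} [Fact p.Prime]

theorem legendreSym_val (x : ZMod p) : legendreSym p x.val = quadraticChar (ZMod p) x := by
  simp [legendreSym]

local notation "χ" => quadraticChar (ZMod p)

theorem abs_sum_quadraticChar_mul_le (hp : p ≠ 2) {A : Finset (ZMod p)} (hA : ∀ a ∈ A, a ≠ 0) :
    |((∑ a ∈ A, χ a : ℤ) : ℝ)| * (#(middleThird p) / 2 - #{z ∈ middleThird p | χ z = 1}) ≤
      #{x | χ x = 1} * (sumFreeNumber A - #A / 3 : ℝ) := by
  have hF : ringChar (ZMod p) ≠ 2 := by rwa [ZMod.ringChar_zmod_n]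
  have key := abs_mul_sum_quadraticChar_le hF hA isSumFree_middleThird zero_notMem_middleThird
  have hσ := two_mul_card_filter_quadraticChar_eq (zero_notMem_middleThird (n := p)) (one_pow 2)
  have hQ := two_mul_card_filter_quadraticChar_eq_card_sub_one hF (ε := 1) (one_pow 2)
  have hI : (p : ℤ) - 1 ≤ 3 * #(middleThird p) := by
    have := sub_one_le_three_mul_card_middleThird (n := p)
    omega
  rw [ZMod.card] at key hQ
  set σ := ∑ z ∈ middleThird p, χ z
  set S := ∑ a ∈ A, χ a
  have key' : |(σ : ℝ)| * |(S : ℝ)| ≤ (p - 1) * sumFreeNumber A - #A * #(middleThird p) := by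
    rw [← abs_mul]; exact_mod_cast key
  have hσ' : 2 * (#{z ∈ middleThird p | χ z = 1} : ℝ) = #(middleThird p) + σ := by
    rw [one_mul] at hσ; exact_mod_cast hσ
  have hQ' : 2 * (#{x | χ x = 1} : ℝ) = p - 1 := by exact_mod_cast hQ
  have hI' : (p : ℝ) - 1 ≤ 3 * #(middleThird p) := by exact_mod_cast hI
  rw [← hQ'] at key' hI'
  rw [show (#(middleThird p) / 2 - #{z ∈ middleThird p | χ z = 1} : ℝ) = -σ / 2 by linarith]
  linarith [mul_le_mul_of_nonneg_left (neg_le_abs (σ : ℝ)) (abs_nonneg (S : ℝ)),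
    mul_le_mul_of_nonneg_left hI' (#A).cast_nonneg (α := ℝ)]

end ZModPrime

/-- For `p ≡ 1 (mod 4)` prime and `A ⊆ (ℤ/pℤ)*` with `sf(A) = |A|/3 + ψ`: if
`D = ½(⌊2p/3⌋ - ⌊p/3⌋) - |Q ∩ [p/3,2p/3)| > 0`, then
`|∑_{x ∈ A} (x/p)| ≤ (2/D)·(ψ|Q| + |Q|)`. -/
theorem legendre_sum_bound_of_sf (p : ℕ) [Fact p.Prime] (hp4 : p % 4 = 1)
    (A Q I : Finset (ZMod p)) (hA : ∀ a ∈ A, a ≠ 0)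
    (hQ : Q = Finset.univ.filter (fun x : ZMod p => x ≠ 0 ∧ ∃ y : ZMod p, y * y = x))
    (hI : I = Finset.univ.filter (fun x : ZMod p => p ≤ 3 * x.val ∧ 3 * x.val < 2 * p))
    (sf : ℕ)
    (hsf : sf = sSup {k : ℕ | ∃ B ⊆ A, (∀ a ∈ B, ∀ b ∈ B, a + b ∉ B) ∧ B.card = k})
    (ψ D : ℝ) (hψ : (sf : ℝ) = (A.card : ℝ) / 3 + ψ)
    (hD : D = ((((2 * p) / 3 : ℕ) : ℝ) - ((p / 3 : ℕ) : ℝ)) / 2 - ((Q ∩ I).card : ℝ))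
    (hDpos : 0 < D) :
    |∑ x ∈ A, (legendreSym p (x.val : ℤ) : ℝ)| ≤ (2 / D) * (ψ * Q.card + Q.card) := by
  have hp2 : p ≠ 2 := by rintro rfl; norm_num at hp4
  have hI' : I = middleThird p := hI
  have hsf' : sf = sumFreeNumber A := hsf
  have hQ' : Q = ({x | quadraticChar (ZMod p) x = 1} : Finset (ZMod p)) :=
    hQ.trans (filter_congr fun _ _ ↦ quadraticChar_eq_one_iff_exists_mul_self.symm)
  have hQI : Q ∩ I = {z ∈ middleThird p | quadraticChar (ZMod p) z = 1} := by
    rw [hQ', hI, filter_inter, univ_inter]; rfl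
  rw [← Nat.cast_sub (Nat.div_le_div_right (by omega)), ← card_middleThird, ← hI'] at hD
  have bound := abs_sum_quadraticChar_mul_le hp2 hA
  push_cast at bound
  rw [← hQI, ← hQ', ← hI', ← hsf', hψ, add_sub_cancel_left, ← hD] at bound
  simp only [legendreSym_val]
  rw [div_mul_eq_mul_div, le_div_iff₀ hDpos]
  nlinarith [abs_nonneg (∑ a ∈ A, (quadraticChar (ZMod p) a : ℝ)), (#Q).cast_nonneg (α := ℝ)]
end
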